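/- Let ∘ satisfy the AGM postulates and define ≼_T as: M ≼_T M' iff either M ∈ Mod(T), or M ∈ Mod(T ∘ {M,M'}*) and M' ∉ Triv. Then for every T' ⊆ Sen, Mod(T ∘ T') \ Triv = Min(Mod(T') \ Triv, ≼_T), where Min(M, ≼) = {M ∈ M | no M' ∈ M with M' ≺ M}. -/
import Mathlib


open Set

variable {Sen ModT : Type*}

/-- Models of a set of sentences. -/
def ModS (sat : ModT → Sen → Prop) (T : Set Sen) : Set ModT := {M | ∀ φ ∈ T, sat M φ}

/-- Sentences satisfied by every model of a class. -/
def starS (sat : ModT → Sen → Prop) (Ms : Set ModT) : Set Sen := {φ | ∀ M ∈ Ms, sat M φ}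

/-- Semantic consequences. -/
def Cn (sat : ModT → Sen → Prop) (T : Set Sen) : Set Sen := starS sat (ModS sat T)

/-- Trivial models: those satisfying every sentence. -/
def Triv (sat : ModT → Sen → Prop) : Set ModT := {M | ∀ φ, sat M φ}

/-- Consistency: Cn(T) ≠ Sen. -/
def Consistent (sat : ModT → Sen → Prop) (T : Set Sen) : Prop := Cn sat T ≠ Set.univ

/-- Strict part of a binary relation. -/
def precRel (r : ModT → ModT → Prop) (M M' : ModT) : Prop := r M M' ∧ ¬ r M' M

/-- Minimal elements of a class of models w.r.t. a relation. -/
def MinSet (Ms : Set ModT) (r : ModT → ModT → Prop) : Set ModT :=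
  {M ∈ Ms | ∀ M' ∈ Ms, ¬ precRel r M' M}

/-- Faithful assignment. -/
def Faithful (sat : ModT → Sen → Prop) (f : Set Sen → ModT → ModT → Prop) : Prop :=
  (∀ T M M', M ∈ ModS sat T → M' ∈ ModS sat T → ¬ precRel (f T) M M') ∧
  (∀ T M M', M ∈ ModS sat T → M' ∉ ModS sat T → precRel (f T) M M')

/-- The AGM postulates (G1)-(G6) for a revision operator. -/
def AGM (sat : ModT → Sen → Prop) (rev : Set Sen → Set Sen → Set Sen) : Prop :=
  (∀ T T', Consistent sat T' → Consistent sat (rev T T')) ∧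
  (∀ T T', ModS sat (rev T T') ⊆ ModS sat T') ∧
  (∀ T T', Consistent sat (T ∪ T') → rev T T' = T ∪ T') ∧
  (∀ T T₁ T₂, Cn sat T₁ = Cn sat T₂ → ModS sat (rev T T₁) = ModS sat (rev T T₂)) ∧
  (∀ T T' T'', ModS sat (rev T T' ∪ T'') ⊆ ModS sat (rev T (T' ∪ T''))) ∧
  (∀ T T' T'', Consistent sat (rev T T' ∪ T'') →
    ModS sat (rev T (T' ∪ T'')) ⊆ ModS sat (rev T T' ∪ T''))

/-- FA+ : a faithful assignment satisfying the three minimality conditions. -/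
def FAplus (sat : ModT → Sen → Prop) (rev : Set Sen → Set Sen → Set Sen)
    (f : Set Sen → ModT → ModT → Prop) : Prop :=
  Faithful sat f ∧
  ∀ T T' : Set Sen,
    (ModS sat (rev T T') \ Triv sat = MinSet (ModS sat T' \ Triv sat) (f T)) ∧
    (Consistent sat T' → (MinSet (ModS sat T' \ Triv sat) (f T)).Nonempty) ∧
    (∀ T'' : Set Sen, Consistent sat (rev T T' ∪ T'') →
      MinSet (ModS sat T' \ Triv sat) (f T) ∩ ModS sat T'' =
        MinSet (ModS sat (T' ∪ T'') \ Triv sat) (f T))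

/-- {M,M'}^*, the set of sentences satisfied by both M and M'. -/
def pairStar (sat : ModT → Sen → Prop) (M M' : ModT) : Set Sen := {φ | sat M φ ∧ sat M' φ}


lemma modS_union' (sat : ModT → Sen → Prop) (A B : Set Sen) :
    ModS sat (A ∪ B) = ModS sat A ∩ ModS sat B := by
  ext M; simp [ModS, or_imp, forall_and]

lemma consistent_iff' (sat : ModT → Sen → Prop) (T : Set Sen) :
    Consistent sat T ↔ ∃ N, N ∈ ModS sat T ∧ N ∉ Triv sat := by
  constructor
  · intro h
    rcases Set.ne_univ_iff_exists_notMem _ |>.mp h with ⟨φ, hφ⟩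
    simp only [Cn, starS, Set.mem_setOf_eq, not_forall] at hφ
    obtain ⟨N, hN, hNφ⟩ := hφ
    exact ⟨N, hN, fun ht => hNφ (ht φ)⟩
  · rintro ⟨N, hN, hNt⟩ h
    apply hNt
    intro φ
    have : φ ∈ Cn sat T := h ▸ Set.mem_univ φ
    exact this N hN

lemma pairStar_comm' (sat : ModT → Sen → Prop) (M M' : ModT) :
    pairStar sat M M' = pairStar sat M' M := by
  ext φ; exact and_comm

lemma mem_modS_pairStar_left (sat : ModT → Sen → Prop) (M M' : ModT) :
    M ∈ ModS sat (pairStar sat M M') := fun _ hφ => hφ.1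

lemma mem_modS_pairStar_right (sat : ModT → Sen → Prop) (M M' : ModT) :
    M' ∈ ModS sat (pairStar sat M M') := fun _ hφ => hφ.2

lemma subset_pairStar' (sat : ModT → Sen → Prop) {T' : Set Sen} {M M' : ModT}
    (hM : M ∈ ModS sat T') (hM' : M' ∈ ModS sat T') :
    T' ⊆ pairStar sat M M' := fun φ hφ => ⟨hM φ hφ, hM' φ hφ⟩

theorem revision_models_eq_min (sat : ModT → Sen → Prop) (rev : Set Sen → Set Sen → Set Sen)
    (hAGM : AGM sat rev) :
    ∀ T T' : Set Sen,
      ModS sat (rev T T') \ Triv sat =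
        MinSet (ModS sat T' \ Triv sat)
          (fun M M' => M ∈ ModS sat T ∨
            (M ∈ ModS sat (rev T (pairStar sat M M')) ∧ M' ∉ Triv sat)) := by
  obtain ⟨g1, g2, g3, _g4, g5, g6⟩ := hAGM
  intro T T'
  ext M
  simp only [MinSet, Set.mem_setOf_eq, Set.mem_diff]
  constructor
  · rintro ⟨hMrev, hMt⟩
    refine ⟨⟨g2 T T' hMrev, hMt⟩, ?_⟩
    rintro M' ⟨hM'T', hM't⟩ ⟨hle, hnle⟩
    rcases hle with hM'T | ⟨hM'p, _⟩
    · -- M' is a nontrivial model of T ∪ T', so rev T T' = T ∪ T'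
      have hcons : Consistent sat (T ∪ T') := by
        rw [consistent_iff']
        exact ⟨M', by rw [modS_union']; exact ⟨hM'T, hM'T'⟩, hM't⟩
      have : M ∈ ModS sat (T ∪ T') := (g3 T T' hcons) ▸ hMrev
      rw [modS_union'] at this
      exact hnle (Or.inl this.1)
    · -- M' ∈ Mod(rev T (pairStar M' M))
      set P := pairStar sat M' M with hP
      have hMP : M ∈ ModS sat P := mem_modS_pairStar_right sat M' M
      have hsub : T' ⊆ P := subset_pairStar' sat hM'T' (g2 T T' hMrev)
      have hUP : T' ∪ P = P := Set.union_eq_self_of_subset_left hsub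
      have hMrevP : M ∈ ModS sat (rev T P) := by
        have : M ∈ ModS sat (rev T T' ∪ P) := by
          rw [modS_union']; exact ⟨hMrev, hMP⟩
        have := g5 T T' P this
        rwa [hUP] at this
      apply hnle
      right
      rw [pairStar_comm']
      exact ⟨hMrevP, hM't⟩
  · rintro ⟨⟨hMT', hMt⟩, hmin⟩
    refine ⟨?_, hMt⟩
    by_cases hcons : Consistent sat (T ∪ T')
    · -- vacuity case: rev T T' = T ∪ T'
      rw [g3 T T' hcons, modS_union']
      refine ⟨?_, hMT'⟩
      by_contra hMT
      rcases (consistent_iff' sat _).mp hcons with ⟨N, hN, hNt⟩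
      rw [modS_union'] at hN
      apply hmin N ⟨hN.2, hNt⟩
      constructor
      · exact Or.inl hN.1
      · rintro (h | ⟨hMp, _⟩)
        · exact hMT h
        · -- rev T (pairStar M N) = T ∪ pairStar M N since consistent
          have hconsP : Consistent sat (T ∪ pairStar sat M N) := by
            rw [consistent_iff']
            refine ⟨N, ?_, hNt⟩
            rw [modS_union']
            exact ⟨hN.1, mem_modS_pairStar_right sat M N⟩
          rw [g3 T _ hconsP, modS_union'] at hMp
          exact hMT hMp.1
    · -- T ∪ T' inconsistent
      have hT'cons : Consistent sat T' := by
        rw [consistent_iff']; exact ⟨M, hMT', hMt⟩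
      rcases (consistent_iff' sat _).mp (g1 T T' hT'cons) with ⟨N, hNrev, hNt⟩
      by_contra hM
      set P := pairStar sat N M with hP
      have hNT' : N ∈ ModS sat T' := g2 T T' hNrev
      have hsub : T' ⊆ P := subset_pairStar' sat hNT' hMT'
      have hUP : T' ∪ P = P := Set.union_eq_self_of_subset_left hsub
      have hNP : N ∈ ModS sat P := mem_modS_pairStar_left sat N M
      have hconsR : Consistent sat (rev T T' ∪ P) := by
        rw [consistent_iff']
        exact ⟨N, by rw [modS_union']; exact ⟨hNrev, hNP⟩, hNt⟩
      have hMT : M ∉ ModS sat T := by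
        intro h
        apply hcons
        rw [consistent_iff']
        exact ⟨M, by rw [modS_union']; exact ⟨h, hMT'⟩, hMt⟩
      apply hmin N ⟨hNT', hNt⟩
      constructor
      · right
        refine ⟨?_, hMt⟩
        have : N ∈ ModS sat (rev T T' ∪ P) := by
          rw [modS_union']; exact ⟨hNrev, hNP⟩
        have := g5 T T' P this
        rwa [hUP] at this
      · rintro (h | ⟨hMp, _⟩)
        · exact hMT h
        · rw [pairStar_comm'] at hMp
          have : M ∈ ModS sat (rev T (T' ∪ P)) := by rwa [hUP]
          have := g6 T T' P hconsR this
          rw [modS_union'] at this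
          exact hM this.1
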